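/- Let u : 2^E → ℝ be an ordinally w-concave function on the subsets of a finite set E. Then for every X, Y ⊆ E and every Z with X ∩ Y ⊆ Z ⊆ X ∪ Y, if u(Z) ≥ u(W) for all W ∈ N(Z) ∩ [X ∩ Y, X ∪ Y], then Z maximizes u over the interval [X ∩ Y, X ∪ Y], i.e., Z ∈ C_u(X ∩ Y, X ∪ Y). -/

import Mathlib

namespace OrdConc

variable {E : Type*} [DecidableEq E]

/-- Membership of an optional element in a finite set: the extra symbol `∅`
(encoded as `none`) always counts as a member of `S ∪ {∅}`. -/
def mem? (x : Option E) (S : Finset E) : Prop :=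
  ∀ a : E, x = some a → a ∈ S

/-- `X − x` (no-op when `x = none`, i.e. the symbol `∅`). -/
def rem (X : Finset E) (x : Option E) : Finset E :=
  x.elim X fun a => X.erase a

/-- `X + x` (no-op when `x = none`, i.e. the symbol `∅`). -/
def add (X : Finset E) (x : Option E) : Finset E :=
  x.elim X fun a => insert a X

/-- `X − x + x'`. -/
def move (X : Finset E) (x x' : Option E) : Finset E :=
  add (rem X x) x'

/-- Ordinal concavity (Definition 1). -/
def OrdinalConcave (u : Finset E → ℝ) : Prop :=
  ∀ X X' : Finset E, ∀ x ∈ X \ X', ∃ x' : Option E, mem? x' (X' \ X) ∧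
    (u X < u (move X (some x) x') ∨
     u X' < u (move X' x' (some x)) ∨
     (u X = u (move X (some x) x') ∧ u X' = u (move X' x' (some x))))

/-- Ordinal weak-concavity (Definition 2). -/
def OrdinalWeakConcave (u : Finset E → ℝ) : Prop :=
  ∀ X X' : Finset E, X ≠ X' → ∃ x x' : Option E, x ≠ x' ∧
    mem? x (X \ X') ∧ mem? x' (X' \ X) ∧
    (u X < u (move X x x') ∨
     u X' < u (move X' x' x) ∨
     (u X = u (move X x x') ∧ u X' = u (move X' x' x)))

/-- An M♮-convex set (family) of subsets of `E`. -/
def MnatConvex (F : Set (Finset E)) : Prop :=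
  ∀ X ∈ F, ∀ X' ∈ F, ∀ x ∈ X \ X', ∃ x' : Option E, mem? x' (X' \ X) ∧
    move X (some x) x' ∈ F ∧ move X' x' (some x) ∈ F

/-- The simultaneous exchange property (†). -/
def Dagger (F : Set (Finset E)) : Prop :=
  ∀ X ∈ F, ∀ X' ∈ F, X ≠ X' → ∃ x x' : Option E, x ≠ x' ∧
    mem? x (X \ X') ∧ mem? x' (X' \ X) ∧
    move X x x' ∈ F ∧ move X' x' x ∈ F

/-- `D*_u`, the family of global maximizers of `u`. -/
def Dstar (u : Finset E → ℝ) : Set (Finset E) :=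
  {X | ∀ Z : Finset E, u Z ≤ u X}

/-- The neighborhood `N(X)`. -/
def Nbhd [Fintype E] (X : Finset E) : Set (Finset E) :=
  {Z | ∃ x x' : Option E, mem? x X ∧ mem? x' (Finset.univ \ X) ∧ Z = move X x x'}

/-- The interval `[X, Y]` in `2^E`. -/
def Interval (X Y : Finset E) : Set (Finset E) :=
  {Z | X ⊆ Z ∧ Z ⊆ Y}

/-- `C_u(X,Y)`, the maximizers of `u` over the interval `[X,Y]`. -/
def CuI (u : Finset E → ℝ) (X Y : Finset E) : Set (Finset E) :=
  {Z | Z ∈ Interval X Y ∧ ∀ W ∈ Interval X Y, u W ≤ u Z}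

/-- `C_u(X)`, the maximizers of `u` among all subsets of `X`. -/
def Cu (u : Finset E → ℝ) (X : Finset E) : Set (Finset E) :=
  {Z | Z ⊆ X ∧ ∀ W ⊆ X, u W ≤ u Z}

/-- Cardinality of the symmetric difference `X Δ Z`. -/
def sdCard (X Z : Finset E) : ℕ := (X \ Z ∪ Z \ X).card

/-- The strict lexicographic order on `ℝ²`. -/
def lexLt (p q : ℝ × ℝ) : Prop := p.1 < q.1 ∨ (p.1 = q.1 ∧ p.2 < q.2)

/-- The (non-strict) lexicographic order on `ℝ²`. -/
def lexLe (p q : ℝ × ℝ) : Prop := lexLt p q ∨ p = q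

/-!
Induct on `|Z Δ W|` for `W` in the interval. The exchange pair `(x, x')` that weak concavity
provides for `Z` and `W` moves `Z` to a neighbour `Z - x + x'` still inside the interval, so
`u (Z - x + x') ≤ u Z`, and moves `W` to `W - x' + x`, which is inside the interval and strictly
closer to `Z`, so `u (W - x' + x) ≤ u Z` by induction. Each of the three alternatives of weak
concavity then forces `u W ≤ u Z`.
-/

lemma mem_move (W : Finset E) (x x' : Option E) (e : E) :
    e ∈ move W x x' ↔ x' = some e ∨ (x ≠ some e ∧ e ∈ W) := by
  cases x <;> cases x' <;> simp [move, add, rem, eq_comm]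

lemma move_mem_interval {A B Z W : Finset E} {x x' : Option E}
    (hZ : Z ∈ Interval A B) (hW : W ∈ Interval A B)
    (hx : mem? x (Z \ W)) (hx' : mem? x' (W \ Z)) : move Z x x' ∈ Interval A B := by
  constructor
  · intro e he
    refine (mem_move _ _ _ _).2 (Or.inr ⟨fun hxe => ?_, hZ.1 he⟩)
    exact (Finset.mem_sdiff.1 (hx e hxe)).2 (hW.1 he)
  · intro e he
    rcases (mem_move _ _ _ _).1 he with h | h
    · exact hW.2 (Finset.mem_sdiff.1 (hx' e h)).1
    · exact hZ.2 h.2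

lemma move_mem_nbhd [Fintype E] {Z W : Finset E} {x x' : Option E}
    (hx : mem? x (Z \ W)) (hx' : mem? x' (W \ Z)) : move Z x x' ∈ Nbhd Z :=
  ⟨x, x', fun a ha => (Finset.mem_sdiff.1 (hx a ha)).1,
    fun a ha => Finset.mem_sdiff.2 ⟨Finset.mem_univ a, (Finset.mem_sdiff.1 (hx' a ha)).2⟩, rfl⟩

lemma sdCard_move_lt {Z W : Finset E} {x x' : Option E} (hxx' : x ≠ x')
    (hx : mem? x (Z \ W)) (hx' : mem? x' (W \ Z)) :
    sdCard Z (move W x' x) < sdCard Z W := by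
  simp only [mem?, Finset.mem_sdiff] at hx hx'
  apply Finset.card_lt_card
  rw [Finset.ssubset_iff_of_subset]
  · obtain ⟨c, hc⟩ : ∃ c, x = some c ∨ x' = some c := by
      cases x <;> cases x' <;> simp_all
    refine ⟨c, ?_, ?_⟩ <;> rcases hc with hc | hc <;> simp_all [mem_move]
  · intro e
    simp only [Finset.mem_union, Finset.mem_sdiff, mem_move]
    grind

theorem le_of_forall_nbhd_inter_interval_le [Fintype E] {u : Finset E → ℝ}
    (hu : OrdinalWeakConcave u) {A B Z : Finset E} (hZ : Z ∈ Interval A B)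
    (hloc : ∀ W ∈ Nbhd Z ∩ Interval A B, u W ≤ u Z) :
    ∀ W ∈ Interval A B, u W ≤ u Z := by
  intro W hW
  induction hd : sdCard Z W using Nat.strong_induction_on generalizing W with
  | _ n ih =>
  subst hd
  by_cases hZW : Z = W
  · rw [hZW]
  obtain ⟨x, x', hxx', hx, hx', hexch⟩ := hu Z W hZW
  have hZ' : u (move Z x x') ≤ u Z :=
    hloc _ ⟨move_mem_nbhd hx hx', move_mem_interval hZ hW hx hx'⟩
  have hW' : u (move W x' x) ≤ u Z :=
    ih _ (sdCard_move_lt hxx' hx hx') _ (move_mem_interval hW hZ hx' hx) rfl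
  rcases hexch with h | h | ⟨-, h⟩ <;> linarith

theorem local_max_on_interval_is_global {E : Type*} [DecidableEq E] [Fintype E]
    (u : Finset E → ℝ) (hu : OrdinalWeakConcave u)
    (X Y Z : Finset E) (hZ : Z ∈ Interval (X ∩ Y) (X ∪ Y))
    (hloc : ∀ W ∈ Nbhd Z ∩ Interval (X ∩ Y) (X ∪ Y), u W ≤ u Z) :
    Z ∈ CuI u (X ∩ Y) (X ∪ Y) :=
  ⟨hZ, le_of_forall_nbhd_inter_interval_le hu hZ hloc⟩
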